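/- Let φ : [0, ∞) → [0, ∞) be a non-increasing function with lim_{s→∞} φ(s) = 0, and suppose there exist constants C > 0 and δ > 0 such that r·φ(s + r) ≤ C·φ(s)^{1+δ} for all s ≥ 0 and all 0 ≤ r ≤ 1. Then there exists a real number S ≥ 0 such that φ(s) = 0 for all s ≥ S. -/
import Mathlib

open Filter

theorem stmt_6 (φ : ℝ → ℝ) (hnonneg : ∀ s, 0 ≤ s → 0 ≤ φ s)
    (hanti : AntitoneOn φ (Set.Ici 0))
    (hlim : Tendsto φ atTop (nhds 0))
    (C δ : ℝ) (hC : 0 < C) (hδ : 0 < δ)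
    (hiter : ∀ s : ℝ, 0 ≤ s → ∀ r : ℝ, 0 ≤ r → r ≤ 1 →
      r * φ (s + r) ≤ C * (φ s) ^ (1 + δ)) :
    ∃ S : ℝ, 0 ≤ S ∧ ∀ s, S ≤ s → φ s = 0 := by
  -- choose a threshold c with c^δ = 1/(2C)
  set c : ℝ := (1 / (2 * C)) ^ δ⁻¹ with hc_def
  have hc_pos : 0 < c := Real.rpow_pos_of_pos (by positivity) _
  have hcδ : c ^ δ = 1 / (2 * C) := by
    rw [hc_def, ← Real.rpow_mul (by positivity), inv_mul_cancel₀ hδ.ne', Real.rpow_one]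
  -- find s₀ ≥ 0 with φ s₀ < c
  obtain ⟨s₀, hφs₀, hs₀⟩ :=
    ((hlim.eventually (gt_mem_nhds hc_pos)).and (eventually_ge_atTop (0:ℝ))).exists
  set ε : ℝ := φ s₀ with hε_def
  have hε0 : 0 ≤ ε := hnonneg s₀ hs₀
  set B : ℝ := 2 * C * ε ^ δ with hB_def
  have hB0 : 0 ≤ B := by positivity
  have hB1 : B ≤ 1 := by
    have h1 : ε ^ δ ≤ c ^ δ := Real.rpow_le_rpow hε0 hφs₀.le hδ.le
    rw [hcδ] at h1
    rw [hB_def]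
    rw [div_eq_mul_inv, one_mul] at h1
    calc 2 * C * ε ^ δ ≤ 2 * C * (2 * C)⁻¹ := by
          apply mul_le_mul_of_nonneg_left h1 (by positivity)
      _ = 1 := by field_simp
  set q : ℝ := (1 / 2 : ℝ) ^ δ with hq_def
  have hq0 : 0 < q := Real.rpow_pos_of_pos (by norm_num) _
  have hq1 : q < 1 := Real.rpow_lt_one (by norm_num) (by norm_num) hδ
  have h1q : 0 < 1 - q := by linarith
  set S : ℝ := s₀ + B / (1 - q) with hS_def
  -- the iteration sequence
  set t : ℕ → ℝ := fun n => Nat.rec s₀ (fun _ x => x + 2 * C * (φ x) ^ δ) n with ht_def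
  have ht0 : t 0 = s₀ := rfl
  have htsucc : ∀ n, t (n + 1) = t n + 2 * C * (φ (t n)) ^ δ := fun n => rfl
  -- auxiliary: ((1/2)^n : ℝ)^δ = q^n
  have hpow : ∀ n : ℕ, ((1 / 2 : ℝ) ^ n) ^ δ = q ^ n := by
    intro n
    rw [← Real.rpow_natCast (1/2 : ℝ) n, ← Real.rpow_mul (by norm_num), mul_comm,
      Real.rpow_mul (by norm_num), Real.rpow_natCast]
  -- main induction
  have main : ∀ n : ℕ, 0 ≤ t n ∧ φ (t n) ≤ ε * (1 / 2) ^ n ∧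
      t n + (B / (1 - q)) * q ^ n ≤ S := by
    intro n
    induction n with
    | zero =>
      refine ⟨by rw [ht0]; exact hs₀, ?_, ?_⟩
      · rw [ht0, pow_zero, mul_one, ← hε_def]
      · rw [ht0, pow_zero, mul_one, hS_def]
    | succ n ih =>
      obtain ⟨h1, h2, h3⟩ := ih
      set a : ℝ := φ (t n) with ha_def
      have ha0 : 0 ≤ a := hnonneg _ h1
      have haε : a ≤ ε := h2.trans (by
        have : (1/2:ℝ)^n ≤ 1 := pow_le_one₀ (by norm_num) (by norm_num)
        nlinarith)
      set r : ℝ := 2 * C * a ^ δ with hr_def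
      have hr0 : 0 ≤ r := by positivity
      have hr1 : r ≤ 1 := by
        have : a ^ δ ≤ ε ^ δ := Real.rpow_le_rpow ha0 haε hδ.le
        calc r ≤ 2 * C * ε ^ δ := by
              rw [hr_def]; exact mul_le_mul_of_nonneg_left this (by positivity)
          _ = B := rfl
          _ ≤ 1 := hB1
      have hrq : r ≤ B * q ^ n := by
        have h4 : a ^ δ ≤ (ε * (1/2)^n) ^ δ := Real.rpow_le_rpow ha0 h2 hδ.le
        have h5 : (ε * (1/2)^n) ^ δ = ε ^ δ * q ^ n := by
          rw [Real.mul_rpow hε0 (by positivity), hpow]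
        rw [h5] at h4
        calc r = 2 * C * a ^ δ := rfl
          _ ≤ 2 * C * (ε ^ δ * q ^ n) := mul_le_mul_of_nonneg_left h4 (by positivity)
          _ = B * q ^ n := by rw [hB_def]; ring
      have ht1 : 0 ≤ t (n + 1) := by rw [htsucc]; positivity
      have hφ1 : φ (t (n + 1)) ≤ ε * (1 / 2) ^ (n + 1) := by
        rcases eq_or_lt_of_le ha0 with ha | ha
        · -- a = 0 : r = 0 and φ(t(n+1)) = a = 0
          have hr_zero : r = 0 := by
            rw [hr_def, ← ha, Real.zero_rpow hδ.ne', mul_zero]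
          have : t (n + 1) = t n := by rw [htsucc, ← hr_def, hr_zero, add_zero]
          rw [this, ← ha_def, ← ha]
          positivity
        · -- a > 0
          have hrpos : 0 < r := by positivity
          have hkey := hiter (t n) h1 r hr0 hr1
          have hrpow : C * a ^ (1 + δ) = (r / 2) * a := by
            rw [Real.rpow_add ha, Real.rpow_one, hr_def]; ring
          rw [← ha_def, hrpow] at hkey
          have h6 : φ (t n + r) ≤ a / 2 := by
            by_contra hcon
            push_neg at hcon
            have := mul_lt_mul_of_pos_left hcon hrpos
            nlinarith
          have h7 : t (n + 1) = t n + r := htsucc n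
          rw [h7]
          calc φ (t n + r) ≤ a / 2 := h6
            _ ≤ (ε * (1/2)^n) / 2 := by linarith
            _ = ε * (1/2)^(n+1) := by ring
      refine ⟨ht1, hφ1, ?_⟩
      have hkey2 : (B / (1 - q)) * q ^ n * q = (B / (1 - q)) * q ^ n - B * q ^ n := by
        field_simp
        ring
      have : t (n + 1) + (B / (1 - q)) * q ^ (n + 1)
          = t n + r + (B / (1 - q)) * q ^ n * q := by
        rw [htsucc, ← hr_def]; ring
      rw [this, hkey2]
      linarith [hrq, h3]
  have hS0 : 0 ≤ S := by
    have := (main 0).2.2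
    rw [hS_def]; positivity
  refine ⟨S, hS0, fun s hs => ?_⟩
  have hs0 : (0:ℝ) ≤ s := hS0.trans hs
  have hbound : ∀ n : ℕ, φ s ≤ ε * (1 / 2) ^ n := by
    intro n
    obtain ⟨h1, h2, h3⟩ := main n
    have htn_le : t n ≤ s := by
      have h4 : (0:ℝ) ≤ B / (1 - q) * q ^ n := by positivity
      have h5 : t n ≤ S := le_trans (le_add_of_nonneg_right h4) h3
      exact h5.trans hs
    exact (hanti (Set.mem_Ici.mpr h1) (Set.mem_Ici.mpr hs0) htn_le).trans h2
  have htend : Tendsto (fun n : ℕ => ε * (1 / 2 : ℝ) ^ n) atTop (nhds 0) := by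
    have := tendsto_pow_atTop_nhds_zero_of_lt_one (by norm_num : (0:ℝ) ≤ 1/2)
      (by norm_num : (1/2:ℝ) < 1)
    simpa using this.const_mul ε
  have : φ s ≤ 0 := ge_of_tendsto' htend hbound
  exact le_antisymm this (hnonneg s hs0)
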